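/- arXiv:1510.03395 — 3 statements merged into one kernel-verified Lean document; each statement's English description precedes it below -/
import Mathlib

section
/- In an inverse semiloopoid G over M, for every g ∈ G the pairs (g⁻¹, g) and (g, g⁻¹) are composable and g⁻¹g = β(g) and gg⁻¹ = α(g). -/
/-- A semiloopoid over a set of units `M ⊆ G`: maps `α, β : G → M ⊆ G` fixing
units, a set `G₂` of composable pairs, and a partial multiplication `m : G₂ → G`
such that `α(g)g = g`, `gβ(g) = g`, and all left and right translations are
injective on their domains. -/
structure Semiloopoid (G : Type*) where
  M : Set G
  α : G → G
  β : G → G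
  α_mem : ∀ g : G, α g ∈ M
  β_mem : ∀ g : G, β g ∈ M
  α_unit : ∀ u ∈ M, α u = u
  β_unit : ∀ u ∈ M, β u = u
  G₂ : Set (G × G)
  mul : (g : G) → (h : G) → (g, h) ∈ G₂ → G
  unit_left_comp : ∀ g : G, (α g, g) ∈ G₂
  unit_left : ∀ g : G, mul (α g) g (unit_left_comp g) = g
  unit_right_comp : ∀ g : G, (g, β g) ∈ G₂
  unit_right : ∀ g : G, mul g (β g) (unit_right_comp g) = g
  left_inj : ∀ (g h h' : G) (p : (g, h) ∈ G₂) (p' : (g, h') ∈ G₂),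
    mul g h p = mul g h' p' → h = h'
  right_inj : ∀ (g h h' : G) (p : (h, g) ∈ G₂) (p' : (h', g) ∈ G₂),
    mul h g p = mul h' g p' → h = h'

/-- An inverse semiloopoid: a semiloopoid with an inversion `ι(g) = g⁻¹` such
that whenever `(g,h) ∈ G₂` also `(g⁻¹, gh) ∈ G₂` with `g⁻¹(gh) = h`, and
whenever `(u,g) ∈ G₂` also `(ug, g⁻¹) ∈ G₂` with `(ug)g⁻¹ = u`. -/
structure InverseSemiloopoid (G : Type*) extends Semiloopoid G where
  inv : G → G
  inv_left_comp : ∀ (g h : G) (p : (g, h) ∈ G₂), (inv g, mul g h p) ∈ G₂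
  inv_left : ∀ (g h : G) (p : (g, h) ∈ G₂),
    mul (inv g) (mul g h p) (inv_left_comp g h p) = h
  inv_right_comp : ∀ (u g : G) (p : (u, g) ∈ G₂), (mul u g p, inv g) ∈ G₂
  inv_right : ∀ (u g : G) (p : (u, g) ∈ G₂),
    mul (mul u g p) (inv g) (inv_right_comp u g p) = u

namespace InverseSemiloopoid

variable {G : Type*} (S : InverseSemiloopoid G)

theorem inv_mul_eq_of_mul_eq {g h k : G} (p : (g, h) ∈ S.G₂) (hk : S.mul g h p = k) :
    ∃ q : (S.inv g, k) ∈ S.G₂, S.mul (S.inv g) k q = h := by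
  subst hk
  exact ⟨S.inv_left_comp g h p, S.inv_left g h p⟩

theorem mul_inv_eq_of_mul_eq {u g k : G} (p : (u, g) ∈ S.G₂) (hk : S.mul u g p = k) :
    ∃ q : (k, S.inv g) ∈ S.G₂, S.mul k (S.inv g) q = u := by
  subst hk
  exact ⟨S.inv_right_comp u g p, S.inv_right u g p⟩

end InverseSemiloopoid

/-- In an inverse semiloopoid `G` over `M`, for every `g ∈ G` the pairs
`(g⁻¹, g)` and `(g, g⁻¹)` are composable, with `g⁻¹g = β(g)` and `gg⁻¹ = α(g)`. -/
theorem inverseSemiloopoid_inv_mul_and_mul_inv {G : Type*}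
    (S : InverseSemiloopoid G) (g : G) :
    ∃ (p : (S.inv g, g) ∈ S.G₂) (q : (g, S.inv g) ∈ S.G₂),
      S.mul (S.inv g) g p = S.β g ∧ S.mul g (S.inv g) q = S.α g := by
  obtain ⟨p, hp⟩ := S.inv_mul_eq_of_mul_eq (S.unit_right_comp g) (S.unit_right g)
  obtain ⟨q, hq⟩ := S.mul_inv_eq_of_mul_eq (S.unit_left_comp g) (S.unit_left g)
  exact ⟨p, q, hp, hq⟩
end

section
/- In an inverse semiloopoid G over M, for every g ∈ G one has α(g⁻¹) = β(g) and β(g⁻¹) = α(g). -/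
/-!
Substituting `gβ(g) = g` into `g⁻¹(gβ(g)) = β(g)` gives `g⁻¹g = β(g)`, and then
`(g⁻¹g)g⁻¹ = g⁻¹` reads `β(g)g⁻¹ = g⁻¹`. Since also
`α(g⁻¹)g⁻¹ = g⁻¹`, right cancellation yields `α(g⁻¹) = β(g)`.
The identity `β(g⁻¹) = α(g)` is the mirror image.
-/

namespace Semiloopoid

variable {G : Type*} (S : Semiloopoid G)

lemma mul_congr {g g' h h' : G} (eg : g = g') (eh : h = h') (p : (g, h) ∈ S.G₂)
    (p' : (g', h') ∈ S.G₂) : S.mul g h p = S.mul g' h' p' := by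
  subst eg eh; rfl

lemma α_eq_of_mul_eq_self {u h : G} {p : (u, h) ∈ S.G₂} (e : S.mul u h p = h) : S.α h = u :=
  S.right_inj h _ _ (S.unit_left_comp h) p ((S.unit_left h).trans e.symm)

lemma β_eq_of_mul_eq_self {h u : G} {p : (h, u) ∈ S.G₂} (e : S.mul h u p = h) : S.β h = u :=
  S.left_inj h _ _ (S.unit_right_comp h) p ((S.unit_right h).trans e.symm)

end Semiloopoid

namespace InverseSemiloopoid

variable {G : Type*} (S : InverseSemiloopoid G)

lemma inv_mul_comp (g : G) : (S.inv g, g) ∈ S.G₂ := by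
  simpa only [S.unit_right] using S.inv_left_comp g (S.β g) (S.unit_right_comp g)

lemma inv_mul_cancel (g : G) : S.mul (S.inv g) g (S.inv_mul_comp g) = S.β g :=
  (S.mul_congr rfl (S.unit_right g).symm _ _).trans (S.inv_left g _ _)

lemma mul_inv_comp (g : G) : (g, S.inv g) ∈ S.G₂ := by
  simpa only [S.unit_left] using S.inv_right_comp (S.α g) g (S.unit_left_comp g)

lemma mul_inv_cancel (g : G) : S.mul g (S.inv g) (S.mul_inv_comp g) = S.α g :=
  (S.mul_congr (S.unit_left g).symm rfl _ _).trans (S.inv_right _ g _)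

lemma β_mul_inv_comp (g : G) : (S.β g, S.inv g) ∈ S.G₂ := by
  simpa only [S.inv_mul_cancel] using S.inv_right_comp (S.inv g) g (S.inv_mul_comp g)

lemma β_mul_inv (g : G) : S.mul (S.β g) (S.inv g) (S.β_mul_inv_comp g) = S.inv g :=
  (S.mul_congr (S.inv_mul_cancel g).symm rfl _ _).trans (S.inv_right _ g _)

lemma inv_mul_α_comp (g : G) : (S.inv g, S.α g) ∈ S.G₂ := by
  simpa only [S.mul_inv_cancel] using S.inv_left_comp g (S.inv g) (S.mul_inv_comp g)

lemma inv_mul_α (g : G) : S.mul (S.inv g) (S.α g) (S.inv_mul_α_comp g) = S.inv g :=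
  (S.mul_congr rfl (S.mul_inv_cancel g).symm _ _).trans (S.inv_left g _ _)

end InverseSemiloopoid

/-- In an inverse semiloopoid `G` over `M`, for every `g ∈ G` one has
`α(g⁻¹) = β(g)` and `β(g⁻¹) = α(g)`. -/
theorem inverseSemiloopoid_α_inv_β_inv {G : Type*}
    (S : InverseSemiloopoid G) (g : G) :
    S.α (S.inv g) = S.β g ∧ S.β (S.inv g) = S.α g :=
  ⟨S.α_eq_of_mul_eq_self (S.β_mul_inv g), S.β_eq_of_mul_eq_self (S.inv_mul_α g)⟩
end

section
/- In an inverse semiloopoid G over M, for every composable pair (g,h) ∈ G₂ the pair (h⁻¹, g⁻¹) is composable and (gh)⁻¹ = h⁻¹g⁻¹. -/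
/-- Statements about products are phrased through this relation, so that the
composability proofs carried by `mul` never have to be transported along equalities. -/
def Semiloopoid.MulEq {G : Type*} (S : Semiloopoid G) (a b c : G) : Prop :=
  ∃ p : (a, b) ∈ S.G₂, S.mul a b p = c

namespace InverseSemiloopoid

variable {G : Type*} (S : InverseSemiloopoid G)

theorem mulEq_mul {g h : G} (p : (g, h) ∈ S.G₂) : S.MulEq g h (S.mul g h p) :=
  ⟨p, rfl⟩

theorem mulEq_inv_left {g h k : G} (hk : S.MulEq g h k) : S.MulEq (S.inv g) k h := by
  obtain ⟨p, rfl⟩ := hk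
  exact ⟨S.inv_left_comp g h p, S.inv_left g h p⟩

theorem mulEq_inv_right {u g k : G} (hk : S.MulEq u g k) : S.MulEq k (S.inv g) u := by
  obtain ⟨p, rfl⟩ := hk
  exact ⟨S.inv_right_comp u g p, S.inv_right u g p⟩

/-- With `k = gh`: `g⁻¹k = h`, hence `hk⁻¹ = (g⁻¹k)k⁻¹ = g⁻¹`, hence `h⁻¹g⁻¹ = h⁻¹(hk⁻¹) = k⁻¹`. -/
theorem mulEq_inv_rev {g h k : G} (hk : S.MulEq g h k) :
    S.MulEq (S.inv h) (S.inv g) (S.inv k) :=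
  S.mulEq_inv_left (S.mulEq_inv_right (S.mulEq_inv_left hk))

end InverseSemiloopoid

/-- In an inverse semiloopoid `G` over `M`, for every composable pair
`(g,h) ∈ G₂` the pair `(h⁻¹, g⁻¹)` is composable and `(gh)⁻¹ = h⁻¹g⁻¹`. -/
theorem inverseSemiloopoid_mul_inv_rev {G : Type*}
    (S : InverseSemiloopoid G) (g h : G) (p : (g, h) ∈ S.G₂) :
    ∃ q : (S.inv h, S.inv g) ∈ S.G₂,
      S.inv (S.mul g h p) = S.mul (S.inv h) (S.inv g) q := by
  obtain ⟨q, hq⟩ := S.mulEq_inv_rev (S.mulEq_mul p)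
  exact ⟨q, hq.symm⟩
end
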